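/- Let A be a complex unital Banach algebra, let e, f, h ∈ A be invertible positive elements, let a ∈ A be such that a^†_{e,h} exists, and suppose a = b c where b x = 0 implies x = 0 and c A = A (so that b^†_{e,f} and c^†_{f,h} exist). Then the following are equivalent: (i) a is weighted EP with weights e and h; (ii) b b^†_{e,f} = c^†_{f,h} c; (iii) b A = c^†_{f,h} A and {x ∈ A : b^†_{e,f} x = 0} = {x ∈ A : c x = 0}. -/

import Mathlib

/-!
Common definitions: hermitian and positive elements of a complex unital Banach
algebra, hermitian elements with respect to the equivalent norm induced by an
invertible positive element (weight), and the weighted Moore–Penrose inverse,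
both for Banach algebra elements and for bounded linear operators between
Banach spaces.
-/

noncomputable section

/-- An element `a` of a complex unital Banach algebra is hermitian if
`‖exp(i t a)‖ = 1` for all real `t`. -/
def IsHermitianEl {A : Type*} [NormedRing A] [NormedAlgebra ℂ A] (a : A) : Prop :=
  ∀ t : ℝ, ‖NormedSpace.exp ((Complex.I * (t : ℂ)) • a)‖ = 1

/-- An element of a complex unital Banach algebra is positive if it is hermitian
and its spectrum is contained in `[0, ∞)`. -/
def IsPositiveEl {A : Type*} [NormedRing A] [NormedAlgebra ℂ A] (a : A) : Prop :=
  IsHermitianEl a ∧ spectrum ℂ a ⊆ Complex.ofReal '' Set.Ici (0 : ℝ)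

/-- `a` is hermitian in `A^u`, i.e. hermitian for the equivalent norm
`‖x‖_u = ‖u^{1/2} x u^{-1/2}‖`, where `u^{1/2}` is the (unique) invertible
positive square root of the invertible positive weight `u`. -/
def IsHermitianWt {A : Type*} [NormedRing A] [NormedAlgebra ℂ A] (u a : A) : Prop :=
  ∃ s : Aˣ, IsPositiveEl (s : A) ∧ ((s : A)) ^ 2 = u ∧
    ∀ t : ℝ, ‖(s : A) * NormedSpace.exp ((Complex.I * (t : ℂ)) • a) * ((s⁻¹ : Aˣ) : A)‖ = 1

/-- `b` is the weighted Moore–Penrose inverse of `a` with weights `e` and `f`. -/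
def IsWMPI {A : Type*} [NormedRing A] [NormedAlgebra ℂ A] (e f a b : A) : Prop :=
  a * b * a = a ∧ b * a * b = b ∧ IsHermitianWt e (a * b) ∧ IsHermitianWt f (b * a)

/-- `a` is weighted EP with weights `e` and `f`. -/
def IsWEP {A : Type*} [NormedRing A] [NormedAlgebra ℂ A] (e f a : A) : Prop :=
  ∃ b : A, IsWMPI e f a b ∧ a * b = b * a

/-- `S ∈ L(Y,X)` is the weighted Moore–Penrose inverse of `T ∈ L(X,Y)` with
weights `E ∈ L(Y)` and `F ∈ L(X)`. -/
def IsWMPIop {X Y : Type*} [NormedAddCommGroup X] [NormedSpace ℂ X]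
    [NormedAddCommGroup Y] [NormedSpace ℂ Y]
    (E : Y →L[ℂ] Y) (F : X →L[ℂ] X) (T : X →L[ℂ] Y) (S : Y →L[ℂ] X) : Prop :=
  (T.comp S).comp T = T ∧ (S.comp T).comp S = S ∧
    IsHermitianWt E (T.comp S) ∧ IsHermitianWt F (S.comp T)

/-- `T ∈ L(X)` is weighted EP with weights `E` and `F`. -/
def IsWEPop {X : Type*} [NormedAddCommGroup X] [NormedSpace ℂ X]
    (E F T : X →L[ℂ] X) : Prop :=
  ∃ S : X →L[ℂ] X, IsWMPIop E F T S ∧ T.comp S = S.comp T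


/-!
Since `b` is left cancellable and `c` is right invertible, `bd * b = 1` and `c * cd = 1`, so
`cd * bd` is the weighted Moore–Penrose inverse of `a = b * c`, with `a * (cd * bd) = b * bd` and
`(cd * bd) * a = cd * c`. As the weighted Moore–Penrose inverse is unique, `a` is weighted EP iff
these two idempotents coincide, and idempotents coincide iff they have the same range and kernel.

Uniqueness rests on the fact that two idempotents `p`, `r` that are hermitian in `A^u` and have
the same range (or the same kernel) are equal: `exp (i π p) = 1 - 2 p`, so after conjugating by
the square root of `u` the unipotent element `(1 - 2 p) * (1 - 2 r) = 1 + 2 d`, with `d * d = 0`,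
is a product of two elements of norm one; its powers `1 + 2 n d` stay bounded, forcing `d = 0`.
This needs the invertible positive square root of `u` to be unique, which follows from a
Sylvester-type argument: if `s * t + t * s' = 0` with `σ s, σ s' ⊆ (0, ∞)`, then `t = K * t * K'`
for the Cayley transforms `K = 2 (1 + s)⁻¹ - 1` and `K'` of `s` and `s'`, whose spectra lie in the
open unit disc, so `t = 0` by Gelfand's formula.
-/

open Filter Topology

section Spectrum

variable {A : Type*} [NormedRing A] [NormedAlgebra ℂ A]

theorem IsPositiveEl.spectrum_subset_Ioi {s : A} (hs : IsPositiveEl s) (hu : IsUnit s) :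
    spectrum ℂ s ⊆ Complex.ofReal '' Set.Ioi 0 := by
  intro z hz
  obtain ⟨r, hr, rfl⟩ := hs.2 hz
  refine ⟨r, lt_of_le_of_ne (Set.mem_Ici.mp hr) ?_, rfl⟩
  rintro rfl
  exact spectrum.zero_notMem ℂ hu (by simpa using hz)

theorem isUnit_one_add_of_spectrum_subset_Ioi {s : A}
    (hs : spectrum ℂ s ⊆ Complex.ofReal '' Set.Ioi 0) : IsUnit (1 + s) := by
  have h : (-1 : ℂ) ∉ spectrum ℂ s := fun hmem => by
    obtain ⟨r, hr, hr1⟩ := hs hmem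
    have := congrArg Complex.re hr1
    simp only [Complex.ofReal_re, Complex.neg_re, Complex.one_re] at this
    linarith [Set.mem_Ioi.mp hr]
  rw [spectrum.notMem_iff, map_neg, map_one, ← neg_add', IsUnit.neg_iff] at h
  exact h

theorem norm_lt_one_of_mem_spectrum_cayley {s : A}
    (hs : spectrum ℂ s ⊆ Complex.ofReal '' Set.Ioi 0) {u : Aˣ} (hu : (u : A) = 1 + s) {z : ℂ}
    (hz : z ∈ spectrum ℂ ((2 : ℂ) • (↑u⁻¹ : A) - 1)) : ‖z‖ < 1 := by
  have h2 : z + 1 ∈ spectrum ℂ ((2 : ℂ) • (↑u⁻¹ : A)) :=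
    spectrum.add_mem_iff.mpr (by rwa [map_one, neg_add_eq_sub])
  have hμ : (z + 1) / 2 ∈ spectrum ℂ (↑u⁻¹ : A) := by
    rw [← spectrum.smul_mem_smul_iff (r := Units.mk0 (2 : ℂ) two_ne_zero)]
    convert h2 using 1
    · simp [Units.smul_def]
    · simp only [Units.smul_def, Units.val_mk0, smul_eq_mul]
      ring
  have hr : ((z + 1) / 2)⁻¹ - 1 ∈ spectrum ℂ s := by
    have := spectrum.inv₀_mem hμ
    rw [hu, ← map_one (algebraMap ℂ A)] at this
    rw [← spectrum.add_mem_add_iff (s := (1 : ℂ))]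
    simpa using this
  obtain ⟨r, hr, hrz⟩ := hs hr
  have hr : (0 : ℝ) < r := hr
  have hz' : z = ((1 - r) / (1 + r) : ℝ) := by
    have h1r : (1 + r : ℂ) ≠ 0 := by exact_mod_cast (by linarith : (1 + r : ℝ) ≠ 0)
    have hμr : (z + 1) / 2 = (1 + r : ℂ)⁻¹ := by
      rw [← inv_inv ((z + 1) / 2), ← sub_eq_iff_eq_add'.mp hrz.symm]
    push_cast
    field_simp at hμr ⊢
    linear_combination hμr
  rw [hz', Complex.norm_real, Real.norm_eq_abs, abs_div, abs_of_pos (by linarith : (0:ℝ) < 1 + r),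
    div_lt_one (by linarith)]
  exact abs_lt.mpr ⟨by linarith, by linarith⟩

theorem mul_cayley_eq {s : A} {u : Aˣ} (hu : (u : A) = 1 + s) :
    (u : A) * ((2 : ℂ) • (↑u⁻¹ : A) - 1) = 1 - s := by
  rw [mul_sub, mul_smul_comm, Units.mul_inv, mul_one, hu, two_smul]; abel

theorem cayley_mul_eq {s : A} {u : Aˣ} (hu : (u : A) = 1 + s) :
    ((2 : ℂ) • (↑u⁻¹ : A) - 1) * u = 1 - s := by
  rw [sub_mul, smul_mul_assoc, Units.inv_mul, one_mul, hu, two_smul]; abel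

variable [CompleteSpace A]

theorem tendsto_pow_atTop_nhds_zero_of_forall_mem_spectrum_norm_lt_one {x : A}
    (hx : ∀ z ∈ spectrum ℂ x, ‖z‖ < 1) : Tendsto (x ^ ·) atTop (𝓝 0) := by
  rcases subsingleton_or_nontrivial A with _ | _
  · simpa only [Subsingleton.elim _ (0 : A)] using tendsto_const_nhds
  have hρx : spectralRadius ℂ x < (1 : NNReal) :=
    spectrum.spectralRadius_lt_of_forall_lt x fun z hz => by exact_mod_cast hx z hz
  obtain ⟨ρ, hxρ, hρ1⟩ := ENNReal.lt_iff_exists_nnreal_btwn.mp hρx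
  have hρ1 : (ρ : ℝ) < 1 := by exact_mod_cast hρ1
  refine squeeze_zero_norm' ?_ (tendsto_pow_atTop_nhds_zero_of_lt_one ρ.2 hρ1)
  have hgelfand := spectrum.pow_nnnorm_pow_one_div_tendsto_nhds_spectralRadius x
  filter_upwards [hgelfand.eventually_lt_const hxρ, eventually_gt_atTop 0] with n hn hn0
  rw [one_div, ENNReal.rpow_inv_lt_iff (by positivity), ENNReal.rpow_natCast] at hn
  exact_mod_cast hn.le

theorem eq_zero_of_mul_mul_eq_self {x y t : A} (hx : ∀ z ∈ spectrum ℂ x, ‖z‖ < 1)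
    (hy : ∀ z ∈ spectrum ℂ y, ‖z‖ < 1) (h : x * t * y = t) : t = 0 := by
  have hpow : ∀ n : ℕ, x ^ n * t * y ^ n = t := by
    intro n
    induction n with
    | zero => simp
    | succ n ih =>
      calc x ^ (n + 1) * t * y ^ (n + 1) = x ^ n * (x * t * y) * y ^ n := by
            rw [pow_succ, pow_succ']; noncomm_ring
        _ = t := by rw [h, ih]
  have hlim := ((tendsto_pow_atTop_nhds_zero_of_forall_mem_spectrum_norm_lt_one hx).mul_const t).mul
    (tendsto_pow_atTop_nhds_zero_of_forall_mem_spectrum_norm_lt_one hy)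
  simp only [hpow, zero_mul] at hlim
  exact tendsto_nhds_unique tendsto_const_nhds hlim

theorem eq_zero_of_mul_add_mul_eq_zero {s s' t : A}
    (hs : spectrum ℂ s ⊆ Complex.ofReal '' Set.Ioi 0)
    (hs' : spectrum ℂ s' ⊆ Complex.ofReal '' Set.Ioi 0) (h : s * t + t * s' = 0) : t = 0 := by
  obtain ⟨u, hu⟩ := isUnit_one_add_of_spectrum_subset_Ioi hs
  obtain ⟨u', hu'⟩ := isUnit_one_add_of_spectrum_subset_Ioi hs'
  refine eq_zero_of_mul_mul_eq_self (fun z => norm_lt_one_of_mem_spectrum_cayley hs hu)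
    (fun z => norm_lt_one_of_mem_spectrum_cayley hs' hu') ?_
  rw [← Units.mul_right_inj u, ← Units.mul_left_inj u']
  calc (u : A) * (((2 : ℂ) • (↑u⁻¹ : A) - 1) * t * ((2 : ℂ) • (↑u'⁻¹ : A) - 1)) * u'
      = (1 - s) * t * (1 - s') := by
        rw [← mul_cayley_eq hu, ← cayley_mul_eq hu']; noncomm_ring
    _ = (1 + s) * t * (1 + s') - (2 : ℤ) • (s * t + t * s') := by noncomm_ring
    _ = u * t * u' := by rw [h, smul_zero, sub_zero, hu, hu']

theorem eq_of_sq_eq_sq_of_spectrum_subset_Ioi {s s' : A}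
    (hs : spectrum ℂ s ⊆ Complex.ofReal '' Set.Ioi 0)
    (hs' : spectrum ℂ s' ⊆ Complex.ofReal '' Set.Ioi 0) (h : s ^ 2 = s' ^ 2) : s = s' := by
  refine sub_eq_zero.mp (eq_zero_of_mul_add_mul_eq_zero hs hs' ?_)
  calc s * (s - s') + (s - s') * s' = s ^ 2 - s' ^ 2 := by noncomm_ring
    _ = 0 := by rw [h, sub_self]

end Spectrum

section HermitianIdempotent

variable {A : Type*} [NormedRing A] [NormedAlgebra ℂ A]

theorem eq_zero_of_mul_self_eq_zero_of_norm_one_add_le_one {d : A} (hd : d * d = 0)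
    (h : ‖1 + d‖ ≤ 1) : d = 0 := by
  have hpow : ∀ n : ℕ, (1 + d) ^ n = 1 + (n : ℂ) • d := by
    intro n
    induction n with
    | zero => simp
    | succ n ih =>
      rw [pow_succ, ih, add_mul, one_mul, mul_add, mul_one, smul_mul_assoc, hd, smul_zero,
        add_zero, Nat.cast_succ, add_smul, one_smul]
      abel
  have hbound : ∀ n : ℕ, (n : ℝ) * ‖d‖ ≤ ‖(1 : A)‖ + 1 := by
    intro n
    rcases n.eq_zero_or_pos with rfl | hn
    · rw [Nat.cast_zero, zero_mul]; positivity
    calc (n : ℝ) * ‖d‖ = ‖(1 + d) ^ n - 1‖ := by rw [hpow, add_sub_cancel_left, norm_smul]; simp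
      _ ≤ ‖(1 + d) ^ n‖ + ‖(1 : A)‖ := norm_sub_le _ _
      _ ≤ 1 + ‖(1 : A)‖ := by
          gcongr
          exact (norm_pow_le' _ hn).trans (pow_le_one₀ (norm_nonneg _) h)
      _ = ‖(1 : A)‖ + 1 := add_comm _ _
  by_contra hne
  obtain ⟨n, hn⟩ := exists_nat_gt ((‖(1 : A)‖ + 1) / ‖d‖)
  rw [div_lt_iff₀ (norm_pos_iff.mpr hne)] at hn
  linarith [hbound n]

variable [CompleteSpace A]

theorem exp_smul_of_isIdempotentElem {p : A} (hp : IsIdempotentElem p) (z : ℂ) :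
    NormedSpace.exp (z • p) = 1 + (Complex.exp z - 1) • p := by
  have hterm : ∀ n : ℕ, (n.factorial⁻¹ : ℂ) • (z • p) ^ n
      = ((n.factorial⁻¹ : ℂ) * z ^ n) • p + if n = 0 then 1 - p else 0 := by
    rintro (_ | n)
    · simp
    · rw [smul_pow, hp.pow_succ_eq, smul_smul, if_neg n.succ_ne_zero, add_zero]
  have hsum := ((NormedSpace.exp_series_hasSum_exp' (𝕂 := ℂ) z).smul_const p).add
    (hasSum_ite_eq 0 (1 - p))
  simp only [smul_eq_mul, ← hterm, ← Complex.exp_eq_exp_ℂ] at hsum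
  rw [(NormedSpace.exp_series_hasSum_exp' (𝕂 := ℂ) (z • p)).unique hsum, sub_smul, one_smul]
  abel

theorem exp_I_mul_pi_smul_of_isIdempotentElem {p : A} (hp : IsIdempotentElem p) :
    NormedSpace.exp ((Complex.I * (Real.pi : ℂ)) • p) = 1 - (2 : ℂ) • p := by
  rw [exp_smul_of_isIdempotentElem hp, mul_comm, Complex.exp_pi_mul_I, sub_eq_add_neg (1 : A)]
  norm_num

theorem IsHermitianWt.eq_zero_of_one_sub_two_smul_mul {u p r d : A} (hpu : IsHermitianWt u p)
    (hru : IsHermitianWt u r) (hp : IsIdempotentElem p) (hr : IsIdempotentElem r)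
    (hd : d * d = 0) (h : (1 - (2 : ℂ) • p) * (1 - (2 : ℂ) • r) = 1 + (2 : ℂ) • d) : d = 0 := by
  obtain ⟨s, hs, hsu, hsp⟩ := hpu
  obtain ⟨s', hs', hs'u, hs'r⟩ := hru
  have hss' : s = s' := Units.ext <| eq_of_sq_eq_sq_of_spectrum_subset_Ioi
    (hs.spectrum_subset_Ioi s.isUnit) (hs'.spectrum_subset_Ioi s'.isUnit) (hsu.trans hs'u.symm)
  subst hss'
  have hJ := hsp Real.pi
  have hK := hs'r Real.pi
  rw [exp_I_mul_pi_smul_of_isIdempotentElem hp] at hJ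
  rw [exp_I_mul_pi_smul_of_isIdempotentElem hr] at hK
  have hD : (2 : ℂ) • ((s : A) * d * ↑s⁻¹) = 0 := by
    refine eq_zero_of_mul_self_eq_zero_of_norm_one_add_le_one ?_ ?_
    · simp only [smul_mul_smul, mul_assoc, Units.inv_mul_cancel_left, ← mul_assoc d d, hd,
        zero_mul, mul_zero, smul_zero]
    · calc ‖1 + (2 : ℂ) • ((s : A) * d * ↑s⁻¹)‖
          = ‖((s : A) * (1 - (2 : ℂ) • p) * ↑s⁻¹) * ((s : A) * (1 - (2 : ℂ) • r) * ↑s⁻¹)‖ := by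
            simp only [mul_assoc, Units.inv_mul_cancel_left, ← mul_assoc (1 - (2 : ℂ) • p), h,
              mul_add, add_mul, one_mul, Units.mul_inv, mul_smul_comm, smul_mul_assoc]
        _ ≤ 1 := (norm_mul_le _ _).trans (by rw [hJ, hK, one_mul])
  simpa using congrArg (fun x => (↑s⁻¹ : A) * x * s) hD

theorem IsIdempotentElem.eq_of_isHermitianWt_of_mul_eq_right {u p r : A}
    (hp : IsIdempotentElem p) (hr : IsIdempotentElem r) (hpu : IsHermitianWt u p)
    (hru : IsHermitianWt u r) (hpr : p * r = r) (hrp : r * p = p) : p = r := by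
  refine (sub_eq_zero.mp (hpu.eq_zero_of_one_sub_two_smul_mul hru hp hr (d := r - p) ?_ ?_)).symm
  · simp only [sub_mul, mul_sub, hp.eq, hr.eq, hpr, hrp, sub_self]
  · simp only [sub_mul, mul_sub, one_mul, mul_one, smul_mul_smul, hpr, smul_sub]
    module

theorem IsIdempotentElem.eq_of_isHermitianWt_of_mul_eq_left {u p r : A}
    (hp : IsIdempotentElem p) (hr : IsIdempotentElem r) (hpu : IsHermitianWt u p)
    (hru : IsHermitianWt u r) (hpr : p * r = p) (hrp : r * p = r) : p = r := by
  refine sub_eq_zero.mp (hpu.eq_zero_of_one_sub_two_smul_mul hru hp hr (d := p - r) ?_ ?_)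
  · simp only [sub_mul, mul_sub, hp.eq, hr.eq, hpr, hrp, sub_self]
  · simp only [sub_mul, mul_sub, one_mul, mul_one, smul_mul_smul, hpr, smul_sub]
    module

end HermitianIdempotent

section Ring

variable {R : Type*} [Ring R]

theorem range_mul_mul_eq_range_mul {x y : R} (h : x * y * x = x) :
    Set.range (x * y * ·) = Set.range (x * ·) := by
  refine Set.Subset.antisymm ?_ ?_
  · rintro _ ⟨z, rfl⟩
    exact ⟨y * z, (mul_assoc _ _ _).symm⟩
  · rintro _ ⟨z, rfl⟩
    exact ⟨x * z, show x * y * (x * z) = x * z by rw [← mul_assoc, h]⟩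

theorem setOf_mul_mul_eq_zero {x y : R} (h : y * x * y = y) :
    {z | x * y * z = 0} = {z | y * z = 0} := by
  ext z
  refine ⟨fun (hz : x * y * z = 0) => show y * z = 0 by
      rw [← h, mul_assoc, mul_assoc, ← mul_assoc x, hz, mul_zero],
    fun (hz : y * z = 0) => show x * y * z = 0 by rw [mul_assoc, hz, mul_zero]⟩

theorem IsIdempotentElem.eq_of_range_eq_of_ker_eq {p q : R} (hp : IsIdempotentElem p)
    (hq : IsIdempotentElem q) (hrange : Set.range (p * ·) = Set.range (q * ·))
    (hker : {z | p * z = 0} = {z | q * z = 0}) : p = q := by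
  obtain ⟨z, hz⟩ : p ∈ Set.range (q * ·) := hrange ▸ ⟨1, mul_one p⟩
  have hqp : q * p = p := by rw [← hz, ← mul_assoc, hq.eq]
  have hqp' : q * (1 - p) = 0 := by
    refine hker.subset (show p * (1 - p) = 0 from ?_)
    rw [mul_sub, mul_one, hp.eq, sub_self]
  rw [mul_sub, mul_one, hqp, sub_eq_zero] at hqp'
  exact hqp'.symm

theorem mul_eq_mul_iff_range_eq_and_ker_eq {b bd c cd : R} (hb : b * bd * b = b)
    (hbd : bd * b * bd = bd) (hc : c * cd * c = c) (hcd : cd * c * cd = cd) :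
    b * bd = cd * c ↔
      Set.range (b * ·) = Set.range (cd * ·) ∧ {z | bd * z = 0} = {z | c * z = 0} := by
  rw [← range_mul_mul_eq_range_mul hb, ← range_mul_mul_eq_range_mul hcd,
    ← setOf_mul_mul_eq_zero hbd, ← setOf_mul_mul_eq_zero hc]
  refine ⟨fun h => h ▸ ⟨rfl, rfl⟩, fun ⟨hrange, hker⟩ => ?_⟩
  refine IsIdempotentElem.eq_of_range_eq_of_ker_eq ?_ ?_ hrange hker
  · rw [IsIdempotentElem, ← mul_assoc, hb]
  · rw [IsIdempotentElem, mul_assoc, ← mul_assoc c, hc]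

end Ring

namespace IsWMPI

variable {A : Type*} [NormedRing A] [NormedAlgebra ℂ A]

theorem isIdempotentElem_mul {e f a b : A} (hb : IsWMPI e f a b) :
    IsIdempotentElem (a * b) := by
  rw [IsIdempotentElem, ← mul_assoc, hb.1]

theorem isIdempotentElem_mul_swap {e f a b : A} (hb : IsWMPI e f a b) :
    IsIdempotentElem (b * a) := by
  rw [IsIdempotentElem, ← mul_assoc, hb.2.1]

theorem mul {e f h b c bd cd : A} (hbd : IsWMPI e f b bd) (hcd : IsWMPI f h c cd)
    (hb : bd * b = 1) (hc : c * cd = 1) : IsWMPI e h (b * c) (cd * bd) := by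
  have hl : b * c * (cd * bd) = b * bd := by
    rw [mul_assoc, ← mul_assoc c, hc, one_mul]
  have hr : cd * bd * (b * c) = cd * c := by
    rw [mul_assoc, ← mul_assoc bd, hb, one_mul]
  refine ⟨?_, ?_, hl ▸ hbd.2.2.1, hr ▸ hcd.2.2.2⟩
  · rw [hl, mul_assoc, ← mul_assoc bd, hb, one_mul]
  · rw [hr, mul_assoc, ← mul_assoc c, hc, one_mul]

variable [CompleteSpace A]

theorem unique {e f a b b' : A} (hb : IsWMPI e f a b) (hb' : IsWMPI e f a b') :
    b = b' := by
  have hab : a * b = a * b' :=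
    hb.isIdempotentElem_mul.eq_of_isHermitianWt_of_mul_eq_right hb'.isIdempotentElem_mul
      hb.2.2.1 hb'.2.2.1 (by rw [← mul_assoc, hb.1]) (by rw [← mul_assoc, hb'.1])
  have hba : b * a = b' * a :=
    hb.isIdempotentElem_mul_swap.eq_of_isHermitianWt_of_mul_eq_left
      hb'.isIdempotentElem_mul_swap hb.2.2.2 hb'.2.2.2
      (by rw [mul_assoc, ← mul_assoc a, hb'.1]) (by rw [mul_assoc, ← mul_assoc a, hb.1])
  calc b = b * a * b := hb.2.1.symm
    _ = b' * (a * b') := by rw [hba, mul_assoc, hab]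
    _ = b' := by rw [← mul_assoc, hb'.2.1]

theorem isWEP_iff {e f a b : A} (hb : IsWMPI e f a b) :
    IsWEP e f a ↔ a * b = b * a :=
  ⟨fun ⟨_, hb', hcomm⟩ => hb.unique hb' ▸ hcomm, fun hcomm => ⟨b, hb, hcomm⟩⟩

end IsWMPI

theorem factorization_bc_weighted_EP_iff_range_ker_general
    {A : Type*} [NormedRing A] [NormedAlgebra ℂ A] [CompleteSpace A]
    (e f h a b c : A)
    (habc : a = b * c)
    (hb : ∀ x : A, b * x = 0 → x = 0) (hc : ∀ y : A, ∃ x : A, c * x = y)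
    (bd : A) (hbd : IsWMPI e f b bd) (cd : A) (hcd : IsWMPI f h c cd) :
    (IsWEP e h a ↔ b * bd = cd * c) ∧
    (IsWEP e h a ↔
      (Set.range (fun y : A => b * y) = Set.range (fun y : A => cd * y) ∧
        {x : A | bd * x = 0} = {x : A | c * x = 0})) := by
  have hbdb : bd * b = 1 :=
    sub_eq_zero.mp <| hb _ <| by rw [mul_sub, ← mul_assoc, hbd.1, mul_one, sub_self]
  have hccd : c * cd = 1 := by
    obtain ⟨x, hx⟩ := hc 1
    calc c * cd = c * cd * (c * x) := by rw [hx, mul_one]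
      _ = 1 := by rw [← mul_assoc, hcd.1, hx]
  have hEP : IsWEP e h a ↔ b * bd = cd * c := by
    rw [habc, (hbd.mul hcd hbdb hccd).isWEP_iff, mul_assoc, ← mul_assoc c, hccd, one_mul,
      mul_assoc, ← mul_assoc bd, hbdb, one_mul]
  exact ⟨hEP, hEP.trans (mul_eq_mul_iff_range_eq_and_ker_eq hbd.1 hbd.2.1 hcd.1 hcd.2.1)⟩

/-- For `a = b c` as above, `a` is weighted EP with weights `e` and `h` iff
`b b^†_{e,f} = c^†_{f,h} c`, iff `b A = c^†_{f,h} A` and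
`{x : b^†_{e,f} x = 0} = {x : c x = 0}`. -/
theorem factorization_bc_weighted_EP_iff_range_ker
    {A : Type*} [NormedRing A] [NormedAlgebra ℂ A] [CompleteSpace A]
    (e f h a b c : A)
    (he : IsPositiveEl e ∧ IsUnit e) (hf : IsPositiveEl f ∧ IsUnit f)
    (hh : IsPositiveEl h ∧ IsUnit h)
    (ad : A) (had : IsWMPI e h a ad)
    (habc : a = b * c)
    (hb : ∀ x : A, b * x = 0 → x = 0) (hc : ∀ y : A, ∃ x : A, c * x = y)
    (bd : A) (hbd : IsWMPI e f b bd) (cd : A) (hcd : IsWMPI f h c cd) :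
    (IsWEP e h a ↔ b * bd = cd * c) ∧
    (IsWEP e h a ↔
      (Set.range (fun y : A => b * y) = Set.range (fun y : A => cd * y) ∧
        {x : A | bd * x = 0} = {x : A | c * x = 0})) :=
  factorization_bc_weighted_EP_iff_range_ker_general e f h a b c habc hb hc bd hbd cd hcd
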